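/- arXiv:1911.02939 — 10 statements merged into one kernel-verified Lean document; each statement's English description precedes it below -/
import Mathlib

section
/- Let (X,d) be a metric space and let T : X → CB(X) be a multivalued F_C-contraction with associated point x₀ ∈ X. Define r = inf{H(Tx, A_x) : x ∈ X, H(Tx, A_x) > 0} (with r = 0 if this set is empty). Then C_{x₀,r} is a fixed circle of T, that is, x ∈ Tx for every x ∈ X with d(x,x₀) = r. Moreover, T fixes every circle C_{x₀,ρ} with 0 ≤ ρ < r, i.e., x ∈ Tx for every x with d(x,x₀) = ρ. -/
open Metric Set Filter

/-- Wardowski's family `𝓕`: `F` is strictly increasing on `(0,∞)`;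
for positive sequences, `αₙ → 0` iff `F (αₙ) → -∞`;
and there is `k ∈ (0,1)` with `α ^ k * F α → 0` as `α → 0⁺`. -/
def WardowskiF (F : ℝ → ℝ) : Prop :=
  StrictMonoOn F (Set.Ioi 0) ∧
  (∀ α : ℕ → ℝ, (∀ n, 0 < α n) →
    (Tendsto α atTop (nhds 0) ↔ Tendsto (fun n => F (α n)) atTop atBot)) ∧
  ∃ k ∈ Set.Ioo (0 : ℝ) 1,
    Tendsto (fun a : ℝ => a ^ k * F a) (nhdsWithin 0 (Set.Ioi 0)) (nhds 0)

theorem fixedCircle_of_multivalued_FC_contraction {X : Type*} [MetricSpace X]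
    (T : X → Set X) (hT : ∀ x, (T x).Nonempty ∧ IsClosed (T x) ∧ Bornology.IsBounded (T x))
    (F : ℝ → ℝ) (hF : WardowskiF F) (τ : ℝ) (hτ : 0 < τ) (x₀ : X)
    (hcontr : ∀ x, 0 < hausdorffDist (T x) {x} →
      0 < dist x x₀ ∧ τ + F (hausdorffDist (T x) {x}) ≤ F (dist x x₀))
    (r : ℝ)
    (hr : r = sInf {ρ : ℝ | ∃ x : X, hausdorffDist (T x) {x} = ρ ∧ 0 < ρ}) :
    (∀ x, dist x x₀ = r → x ∈ T x) ∧
      (∀ ρ : ℝ, 0 ≤ ρ → ρ < r → ∀ x, dist x x₀ = ρ → x ∈ T x) := by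
  -- If the Hausdorff distance is 0, then x ∈ T x.
  have hmem : ∀ x : X, hausdorffDist (T x) {x} = 0 → x ∈ T x := by
    intro x h0
    obtain ⟨hne, hcl, hbd⟩ := hT x
    have hfin : EMetric.hausdorffEdist {x} (T x) ≠ ⊤ :=
      hausdorffEdist_ne_top_of_nonempty_of_bounded (singleton_nonempty x) hne
        Bornology.isBounded_singleton hbd
    have h1 : infDist x (T x) ≤ hausdorffDist {x} (T x) :=
      infDist_le_hausdorffDist_of_mem (mem_singleton x) hfin
    rw [hausdorffDist_comm, h0] at h1
    have h2 : infDist x (T x) = 0 :=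
      le_antisymm h1 infDist_nonneg
    exact (hcl.mem_iff_infDist_zero hne).2 h2
  have hbdd : BddBelow {ρ : ℝ | ∃ x : X, hausdorffDist (T x) {x} = ρ ∧ 0 < ρ} :=
    ⟨0, fun ρ hρ => by obtain ⟨x, _, h⟩ := hρ; exact h.le⟩
  have key : ∀ x : X, dist x x₀ ≤ r → x ∈ T x := by
    intro x hxr
    by_contra hx
    have hpos : 0 < hausdorffDist (T x) {x} := by
      rcases lt_or_eq_of_le (hausdorffDist_nonneg (s := T x) (t := {x})) with h | h
      · exact h
      · exact absurd (hmem x h.symm) hx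
    obtain ⟨hd, hineq⟩ := hcontr x hpos
    have hrle : r ≤ hausdorffDist (T x) {x} := by
      rw [hr]; exact csInf_le hbdd ⟨x, rfl, hpos⟩
    have hFle : F (dist x x₀) ≤ F (hausdorffDist (T x) {x}) :=
      hF.1.monotoneOn (mem_Ioi.2 hd) (mem_Ioi.2 (lt_of_lt_of_le hd (hxr.trans hrle)))
        (hxr.trans hrle)
    linarith
  exact ⟨fun x hx => key x (le_of_eq hx), fun ρ _ hρr x hx => key x (by rw [hx]; exact hρr.le)⟩
end

section
/- Let (X,d) be a metric space and let T : X → CB(X) be a multivalued integral type F_C-contraction with associated point x₀ ∈ X and integrand φ. Define r = inf{H(Tx, A_x) : x ∈ X, H(Tx, A_x) > 0} (with r = 0 if this set is empty). Then C_{x₀,r} is a fixed circle of T, that is, x ∈ Tx for every x ∈ X with d(x,x₀) = r. -/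
open Metric Set Filter

/-- Admissible integrand: nonnegative on `[0,∞)`, integrable on each compact
subset of `[0,∞)`, and with positive integral `∫₀^ε φ > 0` for every `ε > 0`. -/
def PhiOK (φ : ℝ → ℝ) : Prop :=
  (∀ t, 0 ≤ t → 0 ≤ φ t) ∧
  (∀ b : ℝ, 0 ≤ b → MeasureTheory.IntegrableOn φ (Set.Icc 0 b)) ∧
  (∀ ε : ℝ, 0 < ε → 0 < ∫ t in (0 : ℝ)..ε, φ t)

theorem fixedCircle_of_multivalued_integral_FC_contraction {X : Type*} [MetricSpace X]
    (T : X → Set X) (hT : ∀ x, (T x).Nonempty ∧ IsClosed (T x) ∧ Bornology.IsBounded (T x))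
    (F : ℝ → ℝ) (hF : WardowskiF F) (τ : ℝ) (hτ : 0 < τ) (x₀ : X)
    (φ : ℝ → ℝ) (hφ : PhiOK φ)
    (hcontr : ∀ x, 0 < hausdorffDist (T x) {x} →
      0 < dist x x₀ ∧
        τ + F (∫ t in (0 : ℝ)..(hausdorffDist (T x) {x}), φ t) ≤
          F (∫ t in (0 : ℝ)..(dist x x₀), φ t))
    (r : ℝ)
    (hr : r = sInf {ρ : ℝ | ∃ x : X, hausdorffDist (T x) {x} = ρ ∧ 0 < ρ}) :
    ∀ x, dist x x₀ = r → x ∈ T x := by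
  intro x hx
  set H := hausdorffDist (T x) {x} with hH
  have hHnn : 0 ≤ H := hausdorffDist_nonneg
  have hH0 : H = 0 := by
    by_contra hne
    have hHpos : 0 < H := lt_of_le_of_ne hHnn (Ne.symm hne)
    obtain ⟨hdpos, hineq⟩ := hcontr x hHpos
    -- r ≤ H since H belongs to the set whose inf is r
    have hrH : r ≤ H := by
      rw [hr]
      exact csInf_le ⟨0, fun ρ hρ => by obtain ⟨y, -, h⟩ := hρ; exact h.le⟩ ⟨x, rfl, hHpos⟩
    have hrpos : 0 < r := hx ▸ hdpos
    -- interval integrability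
    have hint : ∀ a b : ℝ, 0 ≤ a → a ≤ b → IntervalIntegrable φ MeasureTheory.volume a b := by
      intro a b ha hab
      have h := (hφ.2.1 b (ha.trans hab)).mono_set (Set.Icc_subset_Icc ha le_rfl)
      rw [← Set.uIcc_of_le hab] at h
      exact h.intervalIntegrable
    -- monotonicity of the integral
    have hmono : (∫ t in (0:ℝ)..r, φ t) ≤ ∫ t in (0:ℝ)..H, φ t := by
      have h1 : IntervalIntegrable φ MeasureTheory.volume 0 r := hint 0 r le_rfl hrpos.le
      have h2 : IntervalIntegrable φ MeasureTheory.volume r H := hint r H hrpos.le hrH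
      have hadd := intervalIntegral.integral_add_adjacent_intervals h1 h2
      have hnn : 0 ≤ ∫ t in r..H, φ t :=
        intervalIntegral.integral_nonneg hrH (fun t ht => hφ.1 t (hrpos.le.trans ht.1))
      linarith [hadd]
    have hIr : 0 < ∫ t in (0:ℝ)..r, φ t := hφ.2.2 r hrpos
    have hIH : 0 < ∫ t in (0:ℝ)..H, φ t := hφ.2.2 H hHpos
    have hFmono : F (∫ t in (0:ℝ)..r, φ t) ≤ F (∫ t in (0:ℝ)..H, φ t) :=
      hF.1.monotoneOn hIr hIH hmono
    rw [hx] at hineq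
    linarith
  -- H = 0 implies T x = {x}
  have hne : (T x).Nonempty := (hT x).1
  have hcl : IsClosed (T x) := (hT x).2.1
  have hbd : Bornology.IsBounded (T x) := (hT x).2.2
  have hedne : EMetric.hausdorffEdist (T x) ({x} : Set X) ≠ ⊤ :=
    hausdorffEdist_ne_top_of_nonempty_of_bounded hne ⟨x, rfl⟩ hbd
      (Bornology.isBounded_singleton)
  have he0 : EMetric.hausdorffEdist (T x) ({x} : Set X) = 0 := by
    have := hH0
    rw [hH, hausdorffDist] at this
    exact (ENNReal.toReal_eq_zero_iff _).mp this |>.resolve_right hedne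
  have hclo : closure (T x) = closure ({x} : Set X) :=
    (EMetric.hausdorffEdist_zero_iff_closure_eq_closure).mp he0
  rw [hcl.closure_eq, closure_singleton] at hclo
  rw [hclo]; rfl
end

section
/- Let (X,d) be a metric space and let T : X → CB(X) be a multivalued Ćirić type F_C-contraction with associated point x₀ ∈ X. Define r = inf{H(Tx, A_x) : x ∈ X, H(Tx, A_x) > 0} (with r = 0 if this set is empty). If D(x₀, Tx) = r for every x ∈ C_{x₀,r}, then C_{x₀,r} is a fixed circle of T, that is, x ∈ Tx for every x ∈ X with d(x,x₀) = r. -/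
open Metric Set Filter

/-- The Ćirić type quantity
`M(x,y) = max {d(x,y), D(x,Tx), D(y,Ty), ½[D(x,Ty) + D(y,Tx)]}`. -/
noncomputable def MCiric {X : Type*} [MetricSpace X] (T : X → Set X) (x y : X) : ℝ :=
  max (max (dist x y) (infDist x (T x)))
    (max (infDist y (T y)) ((infDist x (T y) + infDist y (T x)) / 2))

theorem fixedCircle_of_multivalued_Ciric_FC_contraction {X : Type*} [MetricSpace X]
    (T : X → Set X) (hT : ∀ x, (T x).Nonempty ∧ IsClosed (T x) ∧ Bornology.IsBounded (T x))
    (F : ℝ → ℝ) (hF : WardowskiF F) (τ : ℝ) (hτ : 0 < τ) (x₀ : X)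
    (hcontr : ∀ x, 0 < hausdorffDist (T x) {x} →
      0 < MCiric T x x₀ ∧ τ + F (hausdorffDist (T x) {x}) ≤ F (MCiric T x x₀))
    (r : ℝ)
    (hr : r = sInf {ρ : ℝ | ∃ x : X, hausdorffDist (T x) {x} = ρ ∧ 0 < ρ})
    (hD : ∀ x, dist x x₀ = r → infDist x₀ (T x) = r) :
    ∀ x, dist x x₀ = r → x ∈ T x := by
  have key : ∀ y : X, y ∉ T y →
      0 < infDist y (T y) ∧ infDist y (T y) ≤ hausdorffDist (T y) {y} := by
    intro y hy
    obtain ⟨hne, hcl, hbd⟩ := hT y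
    have hfin : EMetric.hausdorffEdist ({y} : Set X) (T y) ≠ ⊤ := by
      exact Metric.hausdorffEdist_ne_top_of_nonempty_of_bounded (singleton_nonempty y) hne
        Bornology.isBounded_singleton hbd
    refine ⟨(hcl.notMem_iff_infDist_pos hne).1 hy, ?_⟩
    rw [hausdorffDist_comm]
    exact infDist_le_hausdorffDist_of_mem (mem_singleton y) hfin
  -- x₀ is a fixed point of T
  have hx₀ : x₀ ∈ T x₀ := by
    by_contra h₀
    obtain ⟨hp, hle⟩ := key x₀ h₀
    have hH : 0 < hausdorffDist (T x₀) {x₀} := lt_of_lt_of_le hp hle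
    obtain ⟨hM, hc⟩ := hcontr x₀ hH
    have hMle : MCiric T x₀ x₀ ≤ hausdorffDist (T x₀) {x₀} := by
      unfold MCiric
      simp only [dist_self]
      apply max_le (max_le (le_of_lt hH) hle) (max_le hle _)
      linarith
    have := hF.1.monotoneOn (Set.mem_Ioi.mpr hM) (Set.mem_Ioi.mpr hH) hMle
    linarith
  have hi₀ : infDist x₀ (T x₀) = 0 := infDist_zero_of_mem hx₀
  intro x hx
  by_contra hxT
  obtain ⟨hp, hle⟩ := key x hxT
  have hH : 0 < hausdorffDist (T x) {x} := lt_of_lt_of_le hp hle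
  obtain ⟨hM, hc⟩ := hcontr x hH
  -- r ≤ H(Tx, {x})
  have hrH : r ≤ hausdorffDist (T x) {x} := by
    rw [hr]
    exact csInf_le ⟨0, fun ρ hρ => by obtain ⟨_, _, hρpos⟩ := hρ; exact le_of_lt hρpos⟩ ⟨x, rfl, hH⟩
  have hDx : infDist x₀ (T x) = r := hD x hx
  have hxT₀ : infDist x (T x₀) ≤ r := by
    calc infDist x (T x₀) ≤ infDist x₀ (T x₀) + dist x x₀ := infDist_le_infDist_add_dist
    _ = r := by rw [hi₀, hx]; ring
  have hMle : MCiric T x x₀ ≤ hausdorffDist (T x) {x} := by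
    unfold MCiric
    apply max_le (max_le (by rw [hx]; exact hrH) hle)
      (max_le (by rw [hi₀]; positivity) _)
    have : (infDist x (T x₀) + infDist x₀ (T x)) / 2 ≤ r := by
      rw [hDx]; linarith
    linarith
  have := hF.1.monotoneOn (Set.mem_Ioi.mpr hM) (Set.mem_Ioi.mpr hH) hMle
  linarith
end

section
/- Let (X,d) be a metric space and let T : X → CB(X) be a multivalued integral Ćirić type F_C-contraction with associated point x₀ ∈ X and integrand φ. Define r = inf{H(Tx, A_x) : x ∈ X, H(Tx, A_x) > 0} (with r = 0 if this set is empty). If D(x₀, Tx) = r for every x ∈ C_{x₀,r}, then C_{x₀,r} is a fixed circle of T, that is, x ∈ Tx for every x ∈ X with d(x,x₀) = r. -/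
open Metric Set Filter

theorem fixedCircle_of_multivalued_integral_Ciric_FC_contraction {X : Type*} [MetricSpace X]
    (T : X → Set X) (hT : ∀ x, (T x).Nonempty ∧ IsClosed (T x) ∧ Bornology.IsBounded (T x))
    (F : ℝ → ℝ) (hF : WardowskiF F) (τ : ℝ) (hτ : 0 < τ) (x₀ : X)
    (φ : ℝ → ℝ) (hφ : PhiOK φ)
    (hcontr : ∀ x, 0 < hausdorffDist (T x) {x} →
      0 < MCiric T x x₀ ∧
        τ + F (∫ t in (0 : ℝ)..(hausdorffDist (T x) {x}), φ t) ≤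
          F (∫ t in (0 : ℝ)..(MCiric T x x₀), φ t))
    (r : ℝ)
    (hr : r = sInf {ρ : ℝ | ∃ x : X, hausdorffDist (T x) {x} = ρ ∧ 0 < ρ})
    (hD : ∀ x, dist x x₀ = r → infDist x₀ (T x) = r) :
    ∀ x, dist x x₀ = r → x ∈ T x := by
  obtain ⟨φnn, φint, φpos⟩ := hφ
  have hII : ∀ b : ℝ, 0 ≤ b → IntervalIntegrable φ MeasureTheory.volume 0 b := by
    intro b hb
    have h : Set.uIcc (0:ℝ) b = Set.Icc 0 b := Set.uIcc_of_le hb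
    exact MeasureTheory.IntegrableOn.intervalIntegrable (h ▸ φint b hb)
  have hmono : ∀ a b : ℝ, 0 ≤ a → a ≤ b →
      (∫ t in (0:ℝ)..a, φ t) ≤ ∫ t in (0:ℝ)..b, φ t := by
    intro a b ha hab
    refine intervalIntegral.integral_mono_interval le_rfl ha hab ?_ (hII b (ha.trans hab))
    exact MeasureTheory.ae_restrict_of_forall_mem measurableSet_Ioc
      (fun t ht => φnn t ht.1.le)
  have hDle : ∀ x, infDist x (T x) ≤ hausdorffDist (T x) {x} := by
    intro x
    have fin : EMetric.hausdorffEdist ({x} : Set X) (T x) ≠ ⊤ :=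
      hausdorffEdist_ne_top_of_nonempty_of_bounded ⟨x, rfl⟩ (hT x).1
        Bornology.isBounded_singleton (hT x).2.2
    calc infDist x (T x) ≤ hausdorffDist ({x} : Set X) (T x) :=
          infDist_le_hausdorffDist_of_mem rfl fin
      _ = hausdorffDist (T x) {x} := hausdorffDist_comm ..
  have key : ∀ x, 0 < hausdorffDist (T x) {x} →
      MCiric T x x₀ ≤ hausdorffDist (T x) {x} → False := by
    intro x hpos hle
    obtain ⟨hM, hineq⟩ := hcontr x hpos
    have h1 : (∫ t in (0:ℝ)..(MCiric T x x₀), φ t) ≤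
        ∫ t in (0:ℝ)..(hausdorffDist (T x) {x}), φ t := hmono _ _ hM.le hle
    have hI1 : 0 < ∫ t in (0:ℝ)..(MCiric T x x₀), φ t := φpos _ hM
    have hI2 : 0 < ∫ t in (0:ℝ)..(hausdorffDist (T x) {x}), φ t := φpos _ hpos
    have h2 := hF.1.monotoneOn hI1 hI2 h1
    linarith
  have hx0 : x₀ ∈ T x₀ := by
    have h0 : hausdorffDist (T x₀) {x₀} = 0 := by
      by_contra hne
      have hpos : 0 < hausdorffDist (T x₀) {x₀} :=
        lt_of_le_of_ne hausdorffDist_nonneg (Ne.symm hne)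
      refine key x₀ hpos ?_
      have hd := hDle x₀
      unfold MCiric
      have : dist x₀ x₀ = 0 := dist_self x₀
      refine max_le (max_le ?_ hd) (max_le hd ?_) <;> [skip; linarith] 
      rw [this]; exact hpos.le
    have : infDist x₀ (T x₀) = 0 :=
      le_antisymm (by simpa [h0] using hDle x₀) infDist_nonneg
    exact ((hT x₀).2.1.mem_iff_infDist_zero (hT x₀).1).2 this
  intro x hx
  have h0 : hausdorffDist (T x) {x} = 0 := by
    by_contra hne
    have hpos : 0 < hausdorffDist (T x) {x} :=
      lt_of_le_of_ne hausdorffDist_nonneg (Ne.symm hne)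
    refine key x hpos ?_
    set h := hausdorffDist (T x) {x} with hh
    have hrle : r ≤ h := by
      rw [hr]
      exact csInf_le ⟨0, fun ρ ⟨_, _, hρ⟩ => hρ.le⟩ ⟨x, rfl, hpos⟩
    have h1 : infDist x₀ (T x₀) = 0 := infDist_zero_of_mem hx0
    have h2 : infDist x (T x₀) ≤ r := by
      calc infDist x (T x₀) ≤ dist x x₀ := infDist_le_dist_of_mem hx0
        _ = r := hx
    have h3 : infDist x₀ (T x) = r := hD x hx
    unfold MCiric
    refine max_le (max_le ?_ (hDle x)) (max_le ?_ ?_)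
    · rw [hx]; exact hrle
    · rw [h1]; exact hpos.le
    · rw [h3]; linarith
  have : infDist x (T x) = 0 :=
    le_antisymm (by simpa [h0] using hDle x) infDist_nonneg
  exact ((hT x).2.1.mem_iff_infDist_zero (hT x).1).2 this
end

section
/- Let (X,d) be a metric space and let T : X → CB(X) be a multivalued F_C-contraction with associated point x₀ ∈ X. Define r = inf{H(Tx, A_x) : x ∈ X, H(Tx, A_x) > 0} (with r = 0 if this set is empty). Then T fixes the closed disc D_{x₀,r}, that is, x ∈ Tx for every x ∈ X with d(x,x₀) ≤ r; in particular T fixes the center x₀ of any fixed circle, i.e., x₀ ∈ Tx₀. -/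
open Metric Set Filter

theorem fixedDisc_of_multivalued_FC_contraction {X : Type*} [MetricSpace X]
    (T : X → Set X) (hT : ∀ x, (T x).Nonempty ∧ IsClosed (T x) ∧ Bornology.IsBounded (T x))
    (F : ℝ → ℝ) (hF : WardowskiF F) (τ : ℝ) (hτ : 0 < τ) (x₀ : X)
    (hcontr : ∀ x, 0 < hausdorffDist (T x) {x} →
      0 < dist x x₀ ∧ τ + F (hausdorffDist (T x) {x}) ≤ F (dist x x₀))
    (r : ℝ)
    (hr : r = sInf {ρ : ℝ | ∃ x : X, hausdorffDist (T x) {x} = ρ ∧ 0 < ρ}) :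
    (∀ x, dist x x₀ ≤ r → x ∈ T x) ∧ x₀ ∈ T x₀ := by
  have key : ∀ x : X, hausdorffDist (T x) {x} = 0 → x ∈ T x := by
    intro x hx0
    have hne : (T x).Nonempty := (hT x).1
    have hbd : Bornology.IsBounded (T x) := (hT x).2.2
    have hedist : EMetric.hausdorffEdist ({x} : Set X) (T x) ≠ ⊤ :=
      Metric.hausdorffEdist_ne_top_of_nonempty_of_bounded (Set.singleton_nonempty x) hne
        Bornology.isBounded_singleton hbd
    have h1 : infDist x (T x) ≤ hausdorffDist ({x} : Set X) (T x) :=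
      infDist_le_hausdorffDist_of_mem (Set.mem_singleton x) hedist
    rw [hausdorffDist_comm] at h1
    rw [hx0] at h1
    have h2 : infDist x (T x) = 0 := le_antisymm h1 infDist_nonneg
    exact ((hT x).2.1.mem_iff_infDist_zero hne).2 h2
  have main : ∀ x, dist x x₀ ≤ r → x ∈ T x := by
    intro x hxr
    by_contra hx
    have hH : 0 < hausdorffDist (T x) {x} := by
      rcases lt_or_eq_of_le (hausdorffDist_nonneg : (0:ℝ) ≤ hausdorffDist (T x) {x}) with h | h
      · exact h
      · exact absurd (key x h.symm) hx
    have hbb : BddBelow {ρ : ℝ | ∃ x : X, hausdorffDist (T x) {x} = ρ ∧ 0 < ρ} :=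
      ⟨0, fun ρ ⟨_, _, hpos⟩ => le_of_lt hpos⟩
    have hrle : r ≤ hausdorffDist (T x) {x} := by
      rw [hr]; exact csInf_le hbb ⟨x, rfl, hH⟩
    obtain ⟨hd, hineq⟩ := hcontr x hH
    have hdH : dist x x₀ ≤ hausdorffDist (T x) {x} := le_trans hxr hrle
    have hFle : F (dist x x₀) ≤ F (hausdorffDist (T x) {x}) :=
      hF.1.monotoneOn hd hH hdH
    linarith
  refine ⟨main, ?_⟩
  by_contra hx
  have hH : 0 < hausdorffDist (T x₀) {x₀} := by
    rcases lt_or_eq_of_le (hausdorffDist_nonneg : (0:ℝ) ≤ hausdorffDist (T x₀) {x₀}) with h | h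
    · exact h
    · exact absurd (key x₀ h.symm) hx
  have := (hcontr x₀ hH).1
  simp at this
end

section
/- Let (X,d) be a metric space and let T : X → K(X) (so that every value Tx is a nonempty compact subset of X) be a multivalued F_C-contraction with associated point x₀ ∈ X. Define r = inf{H(Tx, A_x) : x ∈ X, H(Tx, A_x) > 0} (with r = 0 if this set is empty). Then C_{x₀,r} is a fixed circle of T, and moreover T fixes every circle C_{x₀,ρ} with 0 ≤ ρ < r. -/
open Metric Set Filter

theorem fixedCircle_of_multivalued_FC_contraction_compact {X : Type*} [MetricSpace X]
    (T : X → Set X) (hT : ∀ x, (T x).Nonempty ∧ IsCompact (T x))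
    (F : ℝ → ℝ) (hF : WardowskiF F) (τ : ℝ) (hτ : 0 < τ) (x₀ : X)
    (hcontr : ∀ x, 0 < hausdorffDist (T x) {x} →
      0 < dist x x₀ ∧ τ + F (hausdorffDist (T x) {x}) ≤ F (dist x x₀))
    (r : ℝ)
    (hr : r = sInf {ρ : ℝ | ∃ x : X, hausdorffDist (T x) {x} = ρ ∧ 0 < ρ}) :
    (∀ x, dist x x₀ = r → x ∈ T x) ∧
      (∀ ρ : ℝ, 0 ≤ ρ → ρ < r → ∀ x, dist x x₀ = ρ → x ∈ T x) := by
  have key : ∀ x : X, dist x x₀ ≤ r → x ∈ T x := by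
    intro x hx
    have hH0 : hausdorffDist (T x) {x} = 0 := by
      by_contra h
      have hpos : 0 < hausdorffDist (T x) {x} :=
        lt_of_le_of_ne hausdorffDist_nonneg (Ne.symm h)
      obtain ⟨hd, hineq⟩ := hcontr x hpos
      -- r ≤ H
      have hrle : r ≤ hausdorffDist (T x) {x} := by
        rw [hr]
        exact csInf_le ⟨0, fun ρ hρ => by obtain ⟨y, hy, hy'⟩ := hρ; linarith⟩
          ⟨x, rfl, hpos⟩
      -- H < dist x x₀
      have hFlt : F (hausdorffDist (T x) {x}) < F (dist x x₀) := by linarith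
      have hlt : hausdorffDist (T x) {x} < dist x x₀ := by
        by_contra h'
        push_neg at h'
        exact absurd (hF.1.monotoneOn hd hpos h') (not_le.mpr hFlt)
      linarith
    -- H = 0 implies x ∈ T x
    obtain ⟨hne, hcpt⟩ := hT x
    have hedist : EMetric.hausdorffEdist ({x} : Set X) (T x) ≠ ⊤ :=
      hausdorffEdist_ne_top_of_nonempty_of_bounded (singleton_nonempty x) hne
        Bornology.isBounded_singleton hcpt.isBounded
    have h1 : infDist x (T x) ≤ hausdorffDist ({x} : Set X) (T x) :=
      infDist_le_hausdorffDist_of_mem (mem_singleton x) hedist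
    rw [hausdorffDist_comm, hH0] at h1
    have : infDist x (T x) = 0 := le_antisymm h1 infDist_nonneg
    exact hcpt.isClosed.mem_iff_infDist_zero hne |>.mpr this
  exact ⟨fun x hx => key x hx.le, fun ρ _ hρ x hx => key x (by linarith [hx])⟩
end

section
/- Let (X,d) be a metric space and let T : X → CB(X) be a multivalued integral type F_C-contraction with associated point x₀ ∈ X and integrand φ. Define r = inf{H(Tx, A_x) : x ∈ X, H(Tx, A_x) > 0} (with r = 0 if this set is empty). Then T fixes the closed disc D_{x₀,r}, that is, x ∈ Tx for every x ∈ X with d(x,x₀) ≤ r; in particular x₀ ∈ Tx₀. -/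
open Metric Set Filter

theorem fixedDisc_of_multivalued_integral_FC_contraction {X : Type*} [MetricSpace X]
    (T : X → Set X) (hT : ∀ x, (T x).Nonempty ∧ IsClosed (T x) ∧ Bornology.IsBounded (T x))
    (F : ℝ → ℝ) (hF : WardowskiF F) (τ : ℝ) (hτ : 0 < τ) (x₀ : X)
    (φ : ℝ → ℝ) (hφ : PhiOK φ)
    (hcontr : ∀ x, 0 < hausdorffDist (T x) {x} →
      0 < dist x x₀ ∧
        τ + F (∫ t in (0 : ℝ)..(hausdorffDist (T x) {x}), φ t) ≤
          F (∫ t in (0 : ℝ)..(dist x x₀), φ t))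
    (r : ℝ)
    (hr : r = sInf {ρ : ℝ | ∃ x : X, hausdorffDist (T x) {x} = ρ ∧ 0 < ρ}) :
    (∀ x, dist x x₀ ≤ r → x ∈ T x) ∧ x₀ ∈ T x₀ := by

  have key : ∀ x : X, dist x x₀ ≤ r → x ∈ T x := by
    intro x hx
    have hH0 : hausdorffDist (T x) {x} = 0 := by
      by_contra hne
      have hHpos : 0 < hausdorffDist (T x) {x} :=
        lt_of_le_of_ne hausdorffDist_nonneg (Ne.symm hne)
      obtain ⟨hdpos, hineq⟩ := hcontr x hHpos
      -- r ≤ H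
      have hmem : hausdorffDist (T x) {x} ∈
          {ρ : ℝ | ∃ y : X, hausdorffDist (T y) {y} = ρ ∧ 0 < ρ} := ⟨x, rfl, hHpos⟩
      have hbdd : BddBelow {ρ : ℝ | ∃ y : X, hausdorffDist (T y) {y} = ρ ∧ 0 < ρ} :=
        ⟨0, fun ρ hρ => le_of_lt hρ.choose_spec.2⟩
      have hrH : r ≤ hausdorffDist (T x) {x} := hr ▸ csInf_le hbdd hmem
      have hdH : dist x x₀ ≤ hausdorffDist (T x) {x} := hx.trans hrH
      -- integral monotonicity
      set a := dist x x₀ with ha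
      set b := hausdorffDist (T x) {x} with hb
      have hb0 : (0:ℝ) ≤ b := hausdorffDist_nonneg
      have hint : MeasureTheory.IntegrableOn φ (Set.Icc 0 b) := hφ.2.1 b hb0
      have hI1 : IntervalIntegrable φ MeasureTheory.volume 0 a := by
        rw [intervalIntegrable_iff_integrableOn_Icc_of_le hdpos.le]
        exact hint.mono_set (Set.Icc_subset_Icc le_rfl hdH)
      have hI2 : IntervalIntegrable φ MeasureTheory.volume a b := by
        rw [intervalIntegrable_iff_integrableOn_Icc_of_le hdH]
        exact hint.mono_set (Set.Icc_subset_Icc hdpos.le le_rfl)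
      have hmono : (∫ t in (0:ℝ)..a, φ t) ≤ ∫ t in (0:ℝ)..b, φ t := by
        have hsplit := intervalIntegral.integral_add_adjacent_intervals hI1 hI2
        have hnn : (0:ℝ) ≤ ∫ t in a..b, φ t := by
          apply intervalIntegral.integral_nonneg hdH
          intro u hu
          exact hφ.1 u (hdpos.le.trans hu.1)
        linarith [hsplit]
      have hIa : 0 < ∫ t in (0:ℝ)..a, φ t := hφ.2.2 a hdpos
      have hIb : 0 < ∫ t in (0:ℝ)..b, φ t := hφ.2.2 b hHpos
      have hFmono : F (∫ t in (0:ℝ)..a, φ t) ≤ F (∫ t in (0:ℝ)..b, φ t) :=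
        hF.1.monotoneOn hIa hIb hmono
      linarith
    -- from H = 0 deduce x ∈ T x
    have hne := (hT x).1
    have hEdist : EMetric.hausdorffEdist (T x) {x} ≠ ⊤ :=
      hausdorffEdist_ne_top_of_nonempty_of_bounded hne ⟨x, rfl⟩ (hT x).2.2
        Bornology.isBounded_singleton
    have hinf : infDist x (T x) ≤ hausdorffDist {x} (T x) :=
      infDist_le_hausdorffDist_of_mem rfl (by rwa [EMetric.hausdorffEdist_comm])
    rw [hausdorffDist_comm] at hinf
    rw [hH0] at hinf
    have : infDist x (T x) = 0 := le_antisymm hinf infDist_nonneg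
    exact ((hT x).2.1.mem_iff_infDist_zero hne).mpr this
  have hr0 : 0 ≤ r := by
    rw [hr]
    exact Real.sInf_nonneg (fun ρ hρ => le_of_lt hρ.choose_spec.2)
  refine ⟨key, key x₀ (by simpa using hr0)⟩
end

section
/- Let (X,d) be a metric space and let T : X → CB(X) be a multivalued Ćirić type F_C-contraction with associated point x₀ ∈ X. Define r = inf{H(Tx, A_x) : x ∈ X, H(Tx, A_x) > 0} (with r = 0 if this set is empty). If D(x₀, Tx) = r for every x ∈ D_{x₀,r} with H(Tx, A_x) > 0, then T fixes the closed disc D_{x₀,r}, that is, x ∈ Tx for every x ∈ X with d(x,x₀) ≤ r; in particular x₀ ∈ Tx₀. -/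
open Metric Set Filter

theorem fixedDisc_of_multivalued_Ciric_FC_contraction {X : Type*} [MetricSpace X]
    (T : X → Set X) (hT : ∀ x, (T x).Nonempty ∧ IsClosed (T x) ∧ Bornology.IsBounded (T x))
    (F : ℝ → ℝ) (hF : WardowskiF F) (τ : ℝ) (hτ : 0 < τ) (x₀ : X)
    (hcontr : ∀ x, 0 < hausdorffDist (T x) {x} →
      0 < MCiric T x x₀ ∧ τ + F (hausdorffDist (T x) {x}) ≤ F (MCiric T x x₀))
    (r : ℝ)
    (hr : r = sInf {ρ : ℝ | ∃ x : X, hausdorffDist (T x) {x} = ρ ∧ 0 < ρ})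
    (hD : ∀ x, dist x x₀ ≤ r → 0 < hausdorffDist (T x) {x} → infDist x₀ (T x) = r) :
    (∀ x, dist x x₀ ≤ r → x ∈ T x) ∧ x₀ ∈ T x₀ := by
  have hmono := hF.1.monotoneOn
  have hfin : ∀ x y : X, EMetric.hausdorffEdist (T x) ({y} : Set X) ≠ ⊤ := fun x y =>
    Metric.hausdorffEdist_ne_top_of_nonempty_of_bounded (hT x).1 ⟨y, rfl⟩ (hT x).2.2
      Bornology.isBounded_singleton
  -- if the Hausdorff distance vanishes then x is a fixed point
  have hmem0 : ∀ x : X, hausdorffDist (T x) {x} ≤ 0 → x ∈ T x := by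
    intro x hle
    have h1 : infDist x (T x) ≤ hausdorffDist ({x} : Set X) (T x) :=
      infDist_le_hausdorffDist_of_mem rfl
        (by rw [EMetric.hausdorffEdist_comm]; exact hfin x x)
    rw [hausdorffDist_comm] at h1
    have h0 : infDist x (T x) = 0 := le_antisymm (h1.trans hle) infDist_nonneg
    exact ((hT x).2.1.mem_iff_infDist_zero (hT x).1).mpr h0
  have hDself : ∀ x : X, infDist x (T x) ≤ hausdorffDist (T x) {x} := by
    intro x
    have h1 : infDist x (T x) ≤ hausdorffDist ({x} : Set X) (T x) :=
      infDist_le_hausdorffDist_of_mem rfl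
        (by rw [EMetric.hausdorffEdist_comm]; exact hfin x x)
    rwa [hausdorffDist_comm] at h1
  -- key contradiction lemma
  have hcontra : ∀ x : X, 0 < hausdorffDist (T x) {x} →
      MCiric T x x₀ ≤ hausdorffDist (T x) {x} → False := by
    intro x hpos hle
    obtain ⟨hM, hineq⟩ := hcontr x hpos
    have hFle : F (MCiric T x x₀) ≤ F (hausdorffDist (T x) {x}) :=
      hmono hM (lt_of_lt_of_le hM hle) hle
    linarith
  -- x₀ is a fixed point
  have hx0 : x₀ ∈ T x₀ := by
    by_cases hpos : 0 < hausdorffDist (T x₀) {x₀}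
    · exfalso
      apply hcontra x₀ hpos
      have hd0 := hDself x₀
      unfold MCiric
      simp only [dist_self]
      apply max_le (max_le hpos.le hd0) (max_le hd0 (by linarith))
    · exact hmem0 x₀ (not_lt.mp hpos)
  have hDx00 : infDist x₀ (T x₀) = 0 := infDist_zero_of_mem hx0
  refine ⟨?_, hx0⟩
  intro x hx
  by_cases hpos : 0 < hausdorffDist (T x) {x}
  · exfalso
    apply hcontra x hpos
    have hrH : r ≤ hausdorffDist (T x) {x} := by
      rw [hr]
      exact csInf_le ⟨0, fun ρ ⟨y, _, hρ⟩ => hρ.le⟩ ⟨x, rfl, hpos⟩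
    have h1 : dist x x₀ ≤ hausdorffDist (T x) {x} := hx.trans hrH
    have h2 := hDself x
    have h3 : infDist x (T x₀) ≤ dist x x₀ := infDist_le_dist_of_mem hx0
    have h4 : infDist x₀ (T x) = r := hD x hx hpos
    unfold MCiric
    apply max_le (max_le h1 h2)
    apply max_le (by rw [hDx00]; exact hpos.le)
    rw [h4]
    linarith
  · exact hmem0 x (not_lt.mp hpos)
end

section
/- Let (X,d) be a metric space and let T : X → K(X) (so that every value Tx is a nonempty compact subset of X) be a multivalued Ćirić type F_C-contraction with associated point x₀ ∈ X. Define r = inf{H(Tx, A_x) : x ∈ X, H(Tx, A_x) > 0} (with r = 0 if this set is empty). If D(x₀, Tx) = r for every x ∈ C_{x₀,r}, then C_{x₀,r} is a fixed circle of T, that is, x ∈ Tx for every x ∈ X with d(x,x₀) = r. -/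
open Metric Set Filter

theorem fixedCircle_of_multivalued_Ciric_FC_contraction_compact {X : Type*} [MetricSpace X]
    (T : X → Set X) (hT : ∀ x, (T x).Nonempty ∧ IsCompact (T x))
    (F : ℝ → ℝ) (hF : WardowskiF F) (τ : ℝ) (hτ : 0 < τ) (x₀ : X)
    (hcontr : ∀ x, 0 < hausdorffDist (T x) {x} →
      0 < MCiric T x x₀ ∧ τ + F (hausdorffDist (T x) {x}) ≤ F (MCiric T x x₀))
    (r : ℝ)
    (hr : r = sInf {ρ : ℝ | ∃ x : X, hausdorffDist (T x) {x} = ρ ∧ 0 < ρ})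
    (hD : ∀ x, dist x x₀ = r → infDist x₀ (T x) = r) :
    ∀ x, dist x x₀ = r → x ∈ T x := by
  obtain ⟨hFmono, -, -⟩ := hF
  -- finiteness of Hausdorff edistances
  have hfin : ∀ x : X, EMetric.hausdorffEdist (T x) {x} ≠ ⊤ := fun x =>
    hausdorffEdist_ne_top_of_nonempty_of_bounded (hT x).1 (singleton_nonempty x)
      (hT x).2.isBounded Bornology.isBounded_singleton
  have hinf_le : ∀ x : X, infDist x (T x) ≤ hausdorffDist (T x) {x} := by
    intro x
    rw [hausdorffDist_comm]
    refine infDist_le_hausdorffDist_of_mem (mem_singleton x) ?_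
    rw [EMetric.hausdorffEdist_comm]
    exact hfin x
  -- key: if H(Tx,{x}) > 0 and M(x,x₀) ≤ H(Tx,{x}), contradiction
  have key : ∀ x : X, 0 < hausdorffDist (T x) {x} →
      MCiric T x x₀ ≤ hausdorffDist (T x) {x} → False := by
    intro x hx hM
    obtain ⟨hMpos, hle⟩ := hcontr x hx
    have := hFmono.monotoneOn hMpos hx hM
    linarith
  -- step 1 : T x₀ = {x₀}
  have hx0 : T x₀ = {x₀} := by
    have hH0 : hausdorffDist (T x₀) {x₀} = 0 := by
      by_contra hne
      have hpos : 0 < hausdorffDist (T x₀) {x₀} :=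
        lt_of_le_of_ne hausdorffDist_nonneg (Ne.symm hne)
      refine key x₀ hpos ?_
      have h1 : infDist x₀ (T x₀) ≤ hausdorffDist (T x₀) {x₀} := hinf_le x₀
      simp only [MCiric, dist_self]
      have : (infDist x₀ (T x₀) + infDist x₀ (T x₀)) / 2 = infDist x₀ (T x₀) := by ring
      rw [this]
      simp only [max_le_iff]
      exact ⟨⟨le_of_lt hpos, h1⟩, h1, h1⟩
    exact ((hT x₀).2.isClosed.hausdorffDist_zero_iff_eq isClosed_singleton (hfin x₀)).mp hH0
  -- step 2 : general point on the circle
  intro x hx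
  have hH0 : hausdorffDist (T x) {x} = 0 := by
    by_contra hne
    have hpos : 0 < hausdorffDist (T x) {x} :=
      lt_of_le_of_ne hausdorffDist_nonneg (Ne.symm hne)
    have hrle : r ≤ hausdorffDist (T x) {x} := by
      rw [hr]
      exact csInf_le ⟨0, fun ρ hρ => le_of_lt hρ.choose_spec.2⟩ ⟨x, rfl, hpos⟩
    refine key x hpos ?_
    have h1 : infDist x (T x) ≤ hausdorffDist (T x) {x} := hinf_le x
    have h2 : infDist x₀ (T x₀) = 0 := by rw [hx0]; simp
    have h3 : infDist x (T x₀) = r := by rw [hx0]; simpa using hx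
    have h4 : infDist x₀ (T x) = r := hD x hx
    simp only [MCiric, hx, h2, h3, h4, max_le_iff]
    exact ⟨⟨hrle, h1⟩, hausdorffDist_nonneg, by linarith⟩
  have hinf0 : infDist x (T x) = 0 :=
    le_antisymm (hH0 ▸ hinf_le x) infDist_nonneg
  exact ((hT x).2.isClosed.mem_iff_infDist_zero (hT x).1).mpr hinf0
end

section
/- Let (X,d) be a metric space and let T : X → CB(X) be a multivalued integral Ćirić type F_C-contraction with associated point x₀ ∈ X and integrand φ. Define r = inf{H(Tx, A_x) : x ∈ X, H(Tx, A_x) > 0} (with r = 0 if this set is empty). If D(x₀, Tx) = r for every x ∈ D_{x₀,r} with H(Tx, A_x) > 0, then T fixes the closed disc D_{x₀,r}, that is, x ∈ Tx for every x ∈ X with d(x,x₀) ≤ r; in particular x₀ ∈ Tx₀. -/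
open Metric Set Filter

theorem fixedDisc_of_multivalued_integral_Ciric_FC_contraction' {X : Type*} [MetricSpace X]
    (T : X → Set X) (hT : ∀ x, (T x).Nonempty ∧ IsClosed (T x) ∧ Bornology.IsBounded (T x))
    (F : ℝ → ℝ)
    (hF : StrictMonoOn F (Set.Ioi 0))
    (τ : ℝ) (hτ : 0 < τ) (x₀ : X)
    (φ : ℝ → ℝ)
    (hφ0 : ∀ t, 0 ≤ t → 0 ≤ φ t)
    (hφint : ∀ b : ℝ, 0 ≤ b → MeasureTheory.IntegrableOn φ (Set.Icc 0 b))
    (hφpos : ∀ ε : ℝ, 0 < ε → 0 < ∫ t in (0 : ℝ)..ε, φ t)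
    (hcontr : ∀ x, 0 < hausdorffDist (T x) {x} →
      0 < MCiric T x x₀ ∧
        τ + F (∫ t in (0 : ℝ)..(hausdorffDist (T x) {x}), φ t) ≤
          F (∫ t in (0 : ℝ)..(MCiric T x x₀), φ t))
    (r : ℝ)
    (hr : r = sInf {ρ : ℝ | ∃ x : X, hausdorffDist (T x) {x} = ρ ∧ 0 < ρ})
    (hD : ∀ x, dist x x₀ ≤ r → 0 < hausdorffDist (T x) {x} → infDist x₀ (T x) = r) :
    (∀ x, dist x x₀ ≤ r → x ∈ T x) ∧ x₀ ∈ T x₀ := by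
  -- integral monotonicity
  have hint : ∀ a b : ℝ, 0 ≤ a → a ≤ b →
      (∫ t in (0:ℝ)..a, φ t) ≤ ∫ t in (0:ℝ)..b, φ t := by
    intro a b ha hab
    have hb : (0:ℝ) ≤ b := ha.trans hab
    have hii : IntervalIntegrable φ MeasureTheory.volume 0 b := by
      rw [intervalIntegrable_iff]
      exact (hφint b hb).mono_set (by rw [uIoc_of_le hb]; exact Ioc_subset_Icc_self)
    refine intervalIntegral.integral_mono_interval le_rfl ha hab ?_ hii
    exact (MeasureTheory.ae_restrict_iff' measurableSet_Ioc).2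
      (Filter.Eventually.of_forall fun t ht => hφ0 t ht.1.le)
  -- main contradiction step
  have main : ∀ x, 0 < hausdorffDist (T x) {x} →
      MCiric T x x₀ ≤ hausdorffDist (T x) {x} → False := by
    intro x hx hM
    obtain ⟨hMpos, hineq⟩ := hcontr x hx
    have h1 : 0 < ∫ t in (0:ℝ)..(MCiric T x x₀), φ t := hφpos _ hMpos
    have h2 : (∫ t in (0:ℝ)..(MCiric T x x₀), φ t) ≤
        ∫ t in (0:ℝ)..(hausdorffDist (T x) {x}), φ t := hint _ _ hMpos.le hM
    have h3 : F (∫ t in (0:ℝ)..(MCiric T x x₀), φ t) ≤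
        F (∫ t in (0:ℝ)..(hausdorffDist (T x) {x}), φ t) :=
      hF.monotoneOn h1 (lt_of_lt_of_le h1 h2) h2
    linarith
  -- positivity of hausdorffDist when x ∉ T x
  have hpos : ∀ x, x ∉ T x → 0 < hausdorffDist (T x) {x} := by
    intro x hx
    obtain ⟨hne, hcl, hbd⟩ := hT x
    have hfin : EMetric.hausdorffEdist {x} (T x) ≠ ⊤ :=
      hausdorffEdist_ne_top_of_nonempty_of_bounded ⟨x, rfl⟩ hne (Bornology.isBounded_singleton) hbd
    have hdp : 0 < infDist x (T x) := (hcl.notMem_iff_infDist_pos hne).1 hx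
    have hle : infDist x (T x) ≤ infDist x {x} + hausdorffDist {x} (T x) :=
      infDist_le_infDist_add_hausdorffDist hfin
    rw [infDist_singleton, dist_self, zero_add, hausdorffDist_comm] at hle
    linarith
  have hbound : ∀ x, x ∉ T x →
      infDist x (T x) ≤ hausdorffDist (T x) {x} := by
    intro x hx
    obtain ⟨hne, hcl, hbd⟩ := hT x
    have hfin : EMetric.hausdorffEdist {x} (T x) ≠ ⊤ :=
      hausdorffEdist_ne_top_of_nonempty_of_bounded ⟨x, rfl⟩ hne (Bornology.isBounded_singleton) hbd
    have hle : infDist x (T x) ≤ infDist x {x} + hausdorffDist {x} (T x) :=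
      infDist_le_infDist_add_hausdorffDist hfin
    rwa [infDist_singleton, dist_self, zero_add, hausdorffDist_comm] at hle
  -- x₀ ∈ T x₀
  have hx0 : x₀ ∈ T x₀ := by
    by_contra hmem
    have hH := hpos x₀ hmem
    refine main x₀ hH ?_
    have hDle := hbound x₀ hmem
    unfold MCiric
    rw [dist_self]
    have h0 : (0:ℝ) ≤ hausdorffDist (T x₀) {x₀} := hH.le
    refine max_le (max_le h0 hDle) (max_le hDle (by linarith))
  have hDx0 : infDist x₀ (T x₀) = 0 := infDist_zero_of_mem hx0
  refine ⟨fun x hxr => ?_, hx0⟩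
  by_contra hmem
  have hH := hpos x hmem
  -- r ≤ hausdorffDist (T x) {x}
  have hrle : r ≤ hausdorffDist (T x) {x} := by
    rw [hr]
    exact csInf_le ⟨0, fun ρ hρ => by obtain ⟨_, _, h⟩ := hρ; linarith⟩
      ⟨x, rfl, hH⟩
  refine main x hH ?_
  have h1 : infDist x (T x₀) ≤ dist x x₀ := infDist_le_dist_of_mem hx0
  have h2 : infDist x₀ (T x) = r := hD x hxr hH
  have hDle := hbound x hmem
  unfold MCiric
  rw [hDx0]
  refine max_le (max_le (by linarith) hDle) (max_le hH.le (by linarith))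

theorem fixedDisc_of_multivalued_integral_Ciric_FC_contraction {X : Type*} [MetricSpace X]
    (T : X → Set X) (hT : ∀ x, (T x).Nonempty ∧ IsClosed (T x) ∧ Bornology.IsBounded (T x))
    (F : ℝ → ℝ) (hF : WardowskiF F) (τ : ℝ) (hτ : 0 < τ) (x₀ : X)
    (φ : ℝ → ℝ) (hφ : PhiOK φ)
    (hcontr : ∀ x, 0 < hausdorffDist (T x) {x} →
      0 < MCiric T x x₀ ∧
        τ + F (∫ t in (0 : ℝ)..(hausdorffDist (T x) {x}), φ t) ≤
          F (∫ t in (0 : ℝ)..(MCiric T x x₀), φ t))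
    (r : ℝ)
    (hr : r = sInf {ρ : ℝ | ∃ x : X, hausdorffDist (T x) {x} = ρ ∧ 0 < ρ})
    (hD : ∀ x, dist x x₀ ≤ r → 0 < hausdorffDist (T x) {x} → infDist x₀ (T x) = r) :
    (∀ x, dist x x₀ ≤ r → x ∈ T x) ∧ x₀ ∈ T x₀ :=
  fixedDisc_of_multivalued_integral_Ciric_FC_contraction' T hT F hF.1 τ hτ x₀ φ
    hφ.1 hφ.2.1 hφ.2.2 hcontr r hr hD
end
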